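/- If a vector y in a finite set Y ⊆ ℝ^n is non-dominated in Y with respect to all n coordinates, and y attains the maximum value of the last coordinate over all non-dominated elements of Y, then the truncation of y to its first n−1 coordinates is non-dominated in the set of truncations of elements of Y to their first n−1 coordinates. -/

import Mathlib

def Dominates {n : ℕ} (z y : Fin n → ℝ) : Prop :=
  (∀ k, z k ≤ y k) ∧ (∃ k, z k < y k)

/-- Truncation to the first `n` coordinates. -/
def trunc {n : ℕ} (x : Fin (n + 1) → ℝ) : Fin n → ℝ := fun i => x i.castSucc

/-! A minimal element `w` of `Y` below `z` is non-dominated, so `w` has last coordinate at most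
that of `y`. If `trunc z` dominated `trunc y`, then so would `trunc w ≤ trunc z`, and together with
the last coordinate `w` would dominate `y`. -/

theorem dominates_iff_lt {n : ℕ} {z y : Fin n → ℝ} : Dominates z y ↔ z < y :=
  Pi.lt_def.symm

theorem trunc_mono {n : ℕ} : Monotone (trunc : (Fin (n + 1) → ℝ) → Fin n → ℝ) :=
  fun _ _ h i => h i.castSucc

theorem Dominates.of_trunc {n : ℕ} {z y : Fin (n + 1) → ℝ}
    (h : Dominates (trunc z) (trunc y)) (hlast : z (Fin.last n) ≤ y (Fin.last n)) :
    Dominates z y :=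
  let ⟨hle, k, hk⟩ := h
  ⟨Fin.lastCases hlast hle, k.castSucc, hk⟩

theorem Minimal.not_dominates {n : ℕ} {Y : Set (Fin n → ℝ)} {w : Fin n → ℝ}
    (hw : Minimal (· ∈ Y) w) : ∀ v ∈ Y, ¬ Dominates v w :=
  fun _ hv hvw => hw.not_lt hv (dominates_iff_lt.1 hvw)

theorem max_last_nondominated_truncation_general (n : ℕ)
    (Y : Finset (Fin (n + 1) → ℝ)) (y : Fin (n + 1) → ℝ)
    (hnd : ∀ z ∈ Y, ¬ Dominates z y)
    (hmax : ∀ z ∈ Y, (∀ w ∈ Y, ¬ Dominates w z) →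
      z (Fin.last n) ≤ y (Fin.last n)) :
    ∀ z ∈ Y, ¬ Dominates (trunc z) (trunc y) := by
  intro z hz hzy
  obtain ⟨w, hwz, hw⟩ := Y.finite_toSet.exists_le_minimal hz
  have hwY : w ∈ Y := hw.prop
  have hwy : Dominates (trunc w) (trunc y) :=
    dominates_iff_lt.2 ((trunc_mono hwz).trans_lt (dominates_iff_lt.1 hzy))
  exact hnd w hwY (hwy.of_trunc (hmax w hwY hw.not_dominates))

theorem max_last_nondominated_truncation (n : ℕ) (hn : 1 ≤ n)
    (Y : Finset (Fin (n + 1) → ℝ)) (y : Fin (n + 1) → ℝ) (hy : y ∈ Y)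
    (hnd : ∀ z ∈ Y, ¬ Dominates z y)
    (hmax : ∀ z ∈ Y, (∀ w ∈ Y, ¬ Dominates w z) →
      z (Fin.last n) ≤ y (Fin.last n)) :
    ∀ z ∈ Y, ¬ Dominates (trunc z) (trunc y) :=
  max_last_nondominated_truncation_general n Y y hnd hmax
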